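/- arXiv:2211.15301 — 2 statements merged into one kernel-verified Lean document; each statement's English description precedes it below -/
import Mathlib

section
/- Let H_k, H_o, H_d be complex matrices (of sizes k×k, (n-k)×k, (n-k)×(n-k)) with ‖H_k^{-1}‖ ≤ M₁, ‖H_o‖ ≤ M₂, ‖H_d^{-1}‖ ≤ 1/(F - M₂), and F > M₂ + M₁M₂². Then the Schur complement A = (H_k - H_o^T H_d^{-1} H_o)^{-1} exists and satisfies ‖A‖ ≤ (F - M₂)M₁ / (F - M₂ - M₁M₂²). -/
/-!
Factor `H_k - E = H_k (1 - H_k⁻¹ E)` with `E = H_oᵀ H_d⁻¹ H_o`. Since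
`‖E‖ ≤ ‖H_d⁻¹‖ ‖H_o‖² ≤ M₂² / (F - M₂) =: ε` and `M₁ ε < 1`, the Neumann series makes `H_k - E`
invertible. The resolvent identity `(H_k - E)⁻¹ = H_k⁻¹ + (H_k - E)⁻¹ E H_k⁻¹` then gives
`x ≤ M₁ + M₁ ε x` for `x = ‖(H_k - E)⁻¹‖`, i.e. `x ≤ M₁ / (1 - M₁ ε)`, which is the claimed bound.
-/

open scoped Matrix Matrix.Norms.L2Operator Ring

section NormedRing

variable {R : Type*} [NormedRing R] [HasSummableGeomSeries R]

theorem IsUnit.sub_of_norm_le {a : R} (ha : IsUnit a) {e : R} {M ε : ℝ}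
    (hM : ‖a⁻¹ʳ‖ ≤ M) (hε : ‖e‖ ≤ ε) (hMε : M * ε < 1) : IsUnit (a - e) := by
  have hfac : a - e = a * (1 - a⁻¹ʳ * e) := by
    rw [mul_sub, mul_one, ← mul_assoc, Ring.mul_inverse_cancel a ha, one_mul]
  have hsmall : ‖a⁻¹ʳ * e‖ < 1 := calc
    ‖a⁻¹ʳ * e‖ ≤ ‖a⁻¹ʳ‖ * ‖e‖ := norm_mul_le _ _
    _ ≤ M * ε := mul_le_mul hM hε (norm_nonneg e) ((norm_nonneg _).trans hM)
    _ < 1 := hMε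
  rw [hfac]
  exact ha.mul (Units.oneSub _ hsmall).isUnit

theorem norm_ringInverse_sub_le {a : R} (ha : IsUnit a) {e : R} {M ε : ℝ}
    (hM : ‖a⁻¹ʳ‖ ≤ M) (hε : ‖e‖ ≤ ε) (hMε : M * ε < 1) :
    ‖(a - e)⁻¹ʳ‖ ≤ M / (1 - M * ε) := by
  have hae : IsUnit (a - e) := ha.sub_of_norm_le hM hε hMε
  have hresolvent : (a - e)⁻¹ʳ = a⁻¹ʳ + (a - e)⁻¹ʳ * e * a⁻¹ʳ := by
    refine eq_add_of_sub_eq' ?_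
    rw [Ring.inverse_sub_inverse (iff_of_true hae ha), sub_sub_cancel]
  have hx : ‖(a - e)⁻¹ʳ‖ ≤ M + ‖(a - e)⁻¹ʳ‖ * ε * M := calc
    ‖(a - e)⁻¹ʳ‖ = ‖a⁻¹ʳ + (a - e)⁻¹ʳ * e * a⁻¹ʳ‖ := congrArg norm hresolvent
    _ ≤ ‖a⁻¹ʳ‖ + ‖(a - e)⁻¹ʳ‖ * ‖e‖ * ‖a⁻¹ʳ‖ := by grw [norm_add_le, norm_mul₃_le]
    _ ≤ M + ‖(a - e)⁻¹ʳ‖ * ε * M := by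
      gcongr
      exact mul_nonneg (norm_nonneg _) ((norm_nonneg e).trans hε)
  rw [le_div_iff₀ (by linarith)]
  nlinarith

end NormedRing

namespace Matrix

variable {𝕜 m n : Type*} [RCLike 𝕜] [Fintype m] [Fintype n] [DecidableEq m] [DecidableEq n]

omit [DecidableEq m] in
theorem l2_opNorm_map_star_le (A : Matrix m n 𝕜) : ‖A.map star‖ ≤ ‖A‖ := by
  rw [l2_opNorm_def]
  refine ContinuousLinearMap.opNorm_le_bound _ (norm_nonneg A) fun x => ?_
  set y : EuclideanSpace 𝕜 n := WithLp.toLp 2 (star x.ofLp)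
  have hy : ‖y‖ = ‖x‖ := by simp [y, EuclideanSpace.norm_eq]
  have hconj (i : m) :
      (A.map (starRingEnd 𝕜) *ᵥ x.ofLp) i = starRingEnd 𝕜 ((A *ᵥ y.ofLp) i) := by
    simp [RingHom.map_mulVec, y, Function.comp_def]
  calc _ = ‖(EuclideanSpace.equiv m 𝕜).symm (A *ᵥ y)‖ := by
        simp [EuclideanSpace.norm_eq, toLpLin_apply, hconj]
    _ ≤ ‖A‖ * ‖x‖ := hy ▸ l2_opNorm_mulVec A y

theorem l2_opNorm_transpose_le (A : Matrix m n 𝕜) : ‖Aᵀ‖ ≤ ‖A‖ := by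
  have hT : Aᵀ = (A.map star)ᴴ := by ext; simp
  rw [hT, l2_opNorm_conjTranspose]
  exact l2_opNorm_map_star_le A

theorem l2_opNorm_transpose (A : Matrix m n 𝕜) : ‖Aᵀ‖ = ‖A‖ :=
  le_antisymm (l2_opNorm_transpose_le A) (by simpa using l2_opNorm_transpose_le Aᵀ)

theorem l2_opNorm_transpose_mul_mul_le (B : Matrix m n 𝕜) (C : Matrix m m 𝕜) :
    ‖Bᵀ * C * B‖ ≤ ‖C‖ * ‖B‖ ^ 2 := calc
  ‖Bᵀ * C * B‖ ≤ ‖Bᵀ‖ * ‖C‖ * ‖B‖ := by grw [l2_opNorm_mul, l2_opNorm_mul]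
  _ = ‖C‖ * ‖B‖ ^ 2 := by rw [l2_opNorm_transpose]; ring

end Matrix

theorem schur_complement_norm_bound_general {k m : ℕ}
    (Hk : Matrix (Fin k) (Fin k) ℂ) (Ho : Matrix (Fin m) (Fin k) ℂ)
    (Hd : Matrix (Fin m) (Fin m) ℂ) (M₁ M₂ F : ℝ)
    (hHk : IsUnit Hk)
    (h1 : ‖Hk⁻¹‖ ≤ M₁) (h2 : ‖Ho‖ ≤ M₂) (h3 : ‖Hd⁻¹‖ ≤ 1 / (F - M₂))
    (hF : M₂ + M₁ * M₂ ^ 2 < F) :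
    IsUnit (Hk - Hoᵀ * Hd⁻¹ * Ho) ∧
      ‖(Hk - Hoᵀ * Hd⁻¹ * Ho)⁻¹‖ ≤ (F - M₂) * M₁ / (F - M₂ - M₁ * M₂ ^ 2) := by
  have hM₁ : 0 ≤ M₁ := (norm_nonneg _).trans h1
  have hM₂ : 0 ≤ M₂ := (norm_nonneg _).trans h2
  have hgap : 0 < F - M₂ := by nlinarith
  have hE : ‖Hoᵀ * Hd⁻¹ * Ho‖ ≤ M₂ ^ 2 / (F - M₂) := calc
    ‖Hoᵀ * Hd⁻¹ * Ho‖ ≤ ‖Hd⁻¹‖ * ‖Ho‖ ^ 2 := Matrix.l2_opNorm_transpose_mul_mul_le Ho Hd⁻¹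
    _ ≤ 1 / (F - M₂) * M₂ ^ 2 := by gcongr
    _ = M₂ ^ 2 / (F - M₂) := by ring
  have hsmall : M₁ * (M₂ ^ 2 / (F - M₂)) < 1 := by
    rw [← mul_div_assoc, div_lt_one hgap]
    linarith
  rw [Matrix.nonsing_inv_eq_ringInverse] at h1
  refine ⟨hHk.sub_of_norm_le h1 hE hsmall, ?_⟩
  rw [Matrix.nonsing_inv_eq_ringInverse (Hk - _)]
  refine (norm_ringInverse_sub_le hHk h1 hE hsmall).trans_eq ?_
  field_simp

/-- existence and norm bound for the Schur complement inverse. -/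
theorem schur_complement_norm_bound {k m : ℕ}
    (Hk : Matrix (Fin k) (Fin k) ℂ) (Ho : Matrix (Fin m) (Fin k) ℂ)
    (Hd : Matrix (Fin m) (Fin m) ℂ) (M₁ M₂ F : ℝ)
    (hHk : IsUnit Hk) (hHd : IsUnit Hd)
    (h1 : ‖Hk⁻¹‖ ≤ M₁) (h2 : ‖Ho‖ ≤ M₂) (h3 : ‖Hd⁻¹‖ ≤ 1 / (F - M₂))
    (hF : M₂ + M₁ * M₂ ^ 2 < F) :
    IsUnit (Hk - Hoᵀ * Hd⁻¹ * Ho) ∧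
      ‖(Hk - Hoᵀ * Hd⁻¹ * Ho)⁻¹‖ ≤ (F - M₂) * M₁ / (F - M₂ - M₁ * M₂ ^ 2) :=
  schur_complement_norm_bound_general Hk Ho Hd M₁ M₂ F hHk h1 h2 h3 hF
end

section
/- Let V_k, V̂_k be real n×k matrices with V_k^T V_k = V̂_k^T V̂_k = I_k, let G be a complex diagonal n×n matrix with max_i |G_{ii}| ≤ M, and let F be a complex k×k matrix. Define H = V_k^T G V_k + F and Ĥ = V̂_k^T G V̂_k + F, and assume ‖H^{-1}‖ ≤ γ and ‖Ĥ^{-1}‖ ≤ γ. Then ‖V_k H^{-1} V_k^T − V̂_k Ĥ^{-1} V̂_k^T‖ ≤ 2(γ + γ²M)‖V_k − V̂_k‖ in spectral norm. -/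
/-!
Write `W = V_k`, `W' = V̂_k` (contractions, as `WᴴW = 1`) and `A = H⁻¹`, `B = Ĥ⁻¹`. Then
`W A Wᴴ - W' B W'ᴴ = (W - W') A Wᴴ + W' A (W - W')ᴴ + W' (A - B) W'ᴴ`,
whose first two terms are at most `γ ‖W - W'‖` each. By the resolvent identity
`A - B = A (Ĥ - H) B`, and `Ĥ - H = W'ᴴ G (W' - W) + (W' - W)ᴴ G W` has norm at most
`2 M ‖W - W'‖`, so the last term is at most `2 γ² M ‖W - W'‖`.
-/

open scoped Matrix Matrix.Norms.L2Operator

namespace Matrix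

variable {𝕜 : Type*} [RCLike 𝕜] {l m n p : Type*} [Fintype l] [Fintype m] [Fintype n] [Fintype p]
  [DecidableEq n]

lemma l2_opNorm_one_le : ‖(1 : Matrix n n 𝕜)‖ ≤ 1 := by
  rw [cstar_norm_def, map_one]
  exact ContinuousLinearMap.norm_id_le

lemma l2_opNorm_le_one_of_conjTranspose_mul_self_eq_one {A : Matrix m n 𝕜}
    (h : Aᴴ * A = 1) : ‖A‖ ≤ 1 := by
  have hsq : ‖A‖ * ‖A‖ ≤ 1 := by
    rw [← l2_opNorm_conjTranspose_mul_self, h]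
    exact l2_opNorm_one_le
  nlinarith [norm_nonneg A]

variable [DecidableEq m] [DecidableEq p]

lemma l2_opNorm_mul_mul_le (A : Matrix l m 𝕜) (B : Matrix m n 𝕜) (C : Matrix n p 𝕜) :
    ‖A * B * C‖ ≤ ‖A‖ * ‖B‖ * ‖C‖ :=
  (l2_opNorm_mul _ _).trans <| by gcongr; exact l2_opNorm_mul _ _

lemma l2_opNorm_nonsing_inv_sub_le {A B : Matrix n n 𝕜}
    (h : IsUnit A ↔ IsUnit B) : ‖A⁻¹ - B⁻¹‖ ≤ ‖A⁻¹‖ * ‖B - A‖ * ‖B⁻¹‖ := by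
  simp only [nonsing_inv_eq_ringInverse]
  rw [Ring.inverse_sub_inverse h]
  exact l2_opNorm_mul_mul_le _ _ _

variable {W W' : Matrix m n 𝕜}

lemma l2_opNorm_conjTranspose_mul_mul_sub_le (hW : ‖W‖ ≤ 1) (hW' : ‖W'‖ ≤ 1)
    (G : Matrix m m 𝕜) : ‖W'ᴴ * G * W' - Wᴴ * G * W‖ ≤ 2 * ‖G‖ * ‖W - W'‖ := by
  have hsplit : W'ᴴ * G * W' - Wᴴ * G * W = W'ᴴ * G * (W' - W) + (W' - W)ᴴ * G * W := by
    simp only [conjTranspose_sub, Matrix.mul_sub, Matrix.sub_mul]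
    abel
  rw [hsplit]
  calc _ ≤ ‖W'ᴴ‖ * ‖G‖ * ‖W' - W‖ + ‖(W' - W)ᴴ‖ * ‖G‖ * ‖W‖ :=
        (norm_add_le _ _).trans <| by gcongr <;> exact l2_opNorm_mul_mul_le _ _ _
    _ ≤ 1 * ‖G‖ * ‖W - W'‖ + ‖W - W'‖ * ‖G‖ * 1 := by
        rw [l2_opNorm_conjTranspose, l2_opNorm_conjTranspose, norm_sub_rev W']
        gcongr
    _ = 2 * ‖G‖ * ‖W - W'‖ := by ring

lemma l2_opNorm_mul_mul_conjTranspose_sub_le (hW : ‖W‖ ≤ 1) (hW' : ‖W'‖ ≤ 1)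
    (A B : Matrix n n 𝕜) :
    ‖W * A * Wᴴ - W' * B * W'ᴴ‖ ≤ 2 * ‖A‖ * ‖W - W'‖ + ‖A - B‖ := by
  have hsplit : W * A * Wᴴ - W' * B * W'ᴴ =
      (W - W') * A * Wᴴ + W' * A * (W - W')ᴴ + W' * (A - B) * W'ᴴ := by
    simp only [conjTranspose_sub, Matrix.mul_sub, Matrix.sub_mul]
    abel
  rw [hsplit]
  calc _ ≤ ‖W - W'‖ * ‖A‖ * ‖Wᴴ‖ + ‖W'‖ * ‖A‖ * ‖(W - W')ᴴ‖ + ‖W'‖ * ‖A - B‖ * ‖W'ᴴ‖ :=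
        norm_add₃_le.trans <| by gcongr <;> exact l2_opNorm_mul_mul_le _ _ _
    _ ≤ ‖W - W'‖ * ‖A‖ * 1 + 1 * ‖A‖ * ‖W - W'‖ + 1 * ‖A - B‖ * 1 := by
        simp only [l2_opNorm_conjTranspose]
        gcongr
    _ = 2 * ‖A‖ * ‖W - W'‖ + ‖A - B‖ := by ring

theorem l2_opNorm_compressed_inv_sub_le (hW : ‖W‖ ≤ 1) (hW' : ‖W'‖ ≤ 1)
    (G : Matrix m m 𝕜) (F : Matrix n n 𝕜)
    (hunit : IsUnit (Wᴴ * G * W + F) ↔ IsUnit (W'ᴴ * G * W' + F)) {γ : ℝ}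
    (hγ : ‖(Wᴴ * G * W + F)⁻¹‖ ≤ γ) (hγ' : ‖(W'ᴴ * G * W' + F)⁻¹‖ ≤ γ) :
    ‖W * (Wᴴ * G * W + F)⁻¹ * Wᴴ - W' * (W'ᴴ * G * W' + F)⁻¹ * W'ᴴ‖ ≤
      2 * (γ + γ ^ 2 * ‖G‖) * ‖W - W'‖ := by
  have hγ0 : 0 ≤ γ := (norm_nonneg _).trans hγ
  have hres :
      ‖(Wᴴ * G * W + F)⁻¹ - (W'ᴴ * G * W' + F)⁻¹‖ ≤ γ * (2 * ‖G‖ * ‖W - W'‖) * γ := by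
    refine (l2_opNorm_nonsing_inv_sub_le hunit).trans ?_
    rw [add_sub_add_right_eq_sub]
    gcongr
    exact l2_opNorm_conjTranspose_mul_mul_sub_le hW hW' G
  calc _ ≤ 2 * ‖(Wᴴ * G * W + F)⁻¹‖ * ‖W - W'‖ + γ * (2 * ‖G‖ * ‖W - W'‖) * γ :=
        (l2_opNorm_mul_mul_conjTranspose_sub_le hW hW' _ _).trans (by gcongr)
    _ ≤ 2 * γ * ‖W - W'‖ + γ * (2 * ‖G‖ * ‖W - W'‖) * γ := by gcongr
    _ = 2 * (γ + γ ^ 2 * ‖G‖) * ‖W - W'‖ := by ring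

end Matrix

lemma Matrix.conjTranspose_map_ofReal {m n : Type*} (V : Matrix m n ℝ) :
    (V.map Complex.ofReal)ᴴ = (V.map Complex.ofReal)ᵀ := by
  rw [← conjTranspose_map _ fun x => (Complex.conj_ofReal x).symm,
    conjTranspose_eq_transpose_of_trivial, transpose_map]

lemma Matrix.l2_opNorm_map_ofReal_le_one {m n : Type*} [Fintype m] [Fintype n] [DecidableEq n]
    {V : Matrix m n ℝ} (h : Vᵀ * V = 1) : ‖V.map Complex.ofReal‖ ≤ 1 := by
  refine l2_opNorm_le_one_of_conjTranspose_mul_self_eq_one ?_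
  rw [conjTranspose_map_ofReal, ← transpose_map]
  exact Matrix.map_mul (f := Complex.ofRealHom).symm.trans <| by
    rw [h, Matrix.map_one _ (map_zero _) (map_one _)]

open Matrix in
/-- perturbation bound when the spectral embedding V_k is replaced
by its refinement V̂_k. -/
theorem embedding_perturbation_bound {n k : ℕ}
    (Vk Vhat : Matrix (Fin n) (Fin k) ℝ)
    (hVk : Vkᵀ * Vk = 1) (hVhat : Vhatᵀ * Vhat = 1)
    (g : Fin n → ℂ) (M γ : ℝ)
    (hg : ∀ i, ‖g i‖ ≤ M)
    (F : Matrix (Fin k) (Fin k) ℂ)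
    (H Hhat : Matrix (Fin k) (Fin k) ℂ)
    (hH : H = (Vk.map Complex.ofReal)ᵀ * Matrix.diagonal g * Vk.map Complex.ofReal + F)
    (hHhat : Hhat = (Vhat.map Complex.ofReal)ᵀ * Matrix.diagonal g * Vhat.map Complex.ofReal + F)
    (hHinv : IsUnit H) (hHhatinv : IsUnit Hhat)
    (hbd1 : ‖H⁻¹‖ ≤ γ) (hbd2 : ‖Hhat⁻¹‖ ≤ γ) :
    ‖Vk.map Complex.ofReal * H⁻¹ * (Vk.map Complex.ofReal)ᵀ -
        Vhat.map Complex.ofReal * Hhat⁻¹ * (Vhat.map Complex.ofReal)ᵀ‖ ≤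
      2 * (γ + γ ^ 2 * M) * ‖Vk.map Complex.ofReal - Vhat.map Complex.ofReal‖ := by
  -- for `n = 0` the bound `M` may be negative, but then both sides vanish
  rcases isEmpty_or_nonempty (Fin n) with hn | hn
  · simp only [Subsingleton.elim _ (0 : Matrix (Fin n) (Fin n) ℂ),
      Subsingleton.elim _ (0 : Matrix (Fin n) (Fin k) ℂ), norm_zero, mul_zero, le_refl]
  have hG : ‖diagonal g‖ ≤ M := by
    rw [l2_opNorm_diagonal]
    exact (pi_norm_le_iff_of_nonempty g).mpr hg
  simp only [← conjTranspose_map_ofReal] at hH hHhat ⊢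
  subst hH hHhat
  refine (l2_opNorm_compressed_inv_sub_le (l2_opNorm_map_ofReal_le_one hVk)
    (l2_opNorm_map_ofReal_le_one hVhat) (diagonal g) F (iff_of_true hHinv hHhatinv)
    hbd1 hbd2).trans ?_
  have hγ : 0 ≤ γ := (norm_nonneg _).trans hbd1
  gcongr
end
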